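/- OVPP optional-grabbing pawn games are non-monotonic: there exist an OVPP optional-grabbing pawn game G, a vertex v owned by pawn j, and sets of pawns P' ⊊ P with j ∈ P and j ∉ P', such that Player 1 wins from configuration ⟨v,P'⟩ but Player 1 loses from configuration ⟨v,P⟩. (In particular, one may take G with vertices v₀ → v₁, v₁ → s, v₁ → t, target t, sink s, each vertex owned by its own pawn, P' = ∅, and P = {v₀}.) -/
import Mathlib


open scoped Classical

/-- A strategy maps the history of previously visited positions and the current
position to a next position. -/
abbrev Strat (Pos : Type*) := List Pos → Pos → Pos

/-- A two-player turn-based game with positions `Pos`: `move` is the edge relation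
(every position has a successor), `turn1 p` holds when Player 1 is the one to move at `p`,
and `target` is Player 1's reachability objective. -/
structure TB (Pos : Type*) where
  move : Pos → Pos → Prop
  total : ∀ p, ∃ q, move p q
  turn1 : Pos → Prop
  target : Pos → Prop

namespace TB

variable {Pos : Type*} (g : TB Pos)

/-- A strategy is legal if it always moves along edges of the game. -/
def Legal (f : Strat Pos) : Prop := ∀ h p, g.move p (f h p)

/-- The history (first component) and current position (second component) of the play
after `n` steps, when the game starts at `p0` and the players use `f1` and `f2`. -/
noncomputable def histPlay (f1 f2 : Strat Pos) (p0 : Pos) : ℕ → List Pos × Pos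
  | 0 => ([], p0)
  | n + 1 =>
      let hp : List Pos × Pos := histPlay f1 f2 p0 n
      (hp.1 ++ [hp.2], if g.turn1 hp.2 then f1 hp.1 hp.2 else f2 hp.1 hp.2)

/-- The position of the play after `n` steps. -/
noncomputable def play (f1 f2 : Strat Pos) (p0 : Pos) (n : ℕ) : Pos :=
  (g.histPlay f1 f2 p0 n).2

/-- Player 1 has a winning strategy from `p0`: some legal strategy such that against every
legal Player 2 strategy the play visits the target. -/
def Win1 (p0 : Pos) : Prop :=
  ∃ f1, g.Legal f1 ∧ ∀ f2, g.Legal f2 → ∃ n, g.target (g.play f1 f2 p0 n)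

/-- Player 2 has a winning strategy from `p0`: some legal strategy such that against every
legal Player 1 strategy the play never visits the target. -/
def Win2 (p0 : Pos) : Prop :=
  ∃ f2, g.Legal f2 ∧ ∀ f1, g.Legal f1 → ∀ n, ¬ g.target (g.play f1 f2 p0 n)

end TB

/-- An MVPP pawn game: a directed graph in which every vertex has a successor, each
vertex `w` is owned by the unique pawn `owner w`, and `target` is Player 1's objective. -/
structure PawnGame (V : Type*) (ι : Type*) where
  E : V → V → Prop
  total : ∀ w, ∃ u, E w u
  owner : V → ι
  target : V → Prop

/-- Positions of the turn-based game induced by a pawn game under a grabbing mechanism: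
`conf w P` is a configuration (token on `w`, Player 1 controls the pawns in `P`), and
`mid u w P` is the intermediate position after the token was moved from `w` to `u`. -/
inductive GPos (V : Type*) (ι : Type*) where
  | conf (w : V) (P : Set ι)
  | mid (u w : V) (P : Set ι)

/-- Moves of the optional-grabbing mechanism. -/
inductive OGMove {V ι : Type*} (G : PawnGame V ι) : GPos V ι → GPos V ι → Prop
  | step {w u : V} {P : Set ι} : G.E w u → OGMove G (.conf w P) (.mid u w P)
  | noGrab {u w : V} {P : Set ι} : OGMove G (.mid u w P) (.conf u P)
  | grabBy2 {u w : V} {P : Set ι} {j : ι} :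
      G.owner w ∈ P → j ∈ P → OGMove G (.mid u w P) (.conf u (P \ {j}))
  | grabBy1 {u w : V} {P : Set ι} {j : ι} :
      G.owner w ∉ P → j ∉ P → OGMove G (.mid u w P) (.conf u (insert j P))

/-- The turn-based game induced by an optional-grabbing pawn game. -/
def PawnGame.OG {V ι : Type*} (G : PawnGame V ι) : TB (GPos V ι) where
  move := OGMove G
  total := by
    rintro (⟨w, P⟩ | ⟨u, w, P⟩)
    · obtain ⟨u, hu⟩ := G.total w
      exact ⟨.mid u w P, .step hu⟩
    · exact ⟨.conf u P, .noGrab⟩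
  turn1 := fun p =>
    match p with
    | .conf w P => G.owner w ∈ P
    | .mid _ w P => G.owner w ∉ P
  target := fun p =>
    match p with
    | .conf w _ => G.target w
    | .mid _ _ _ => False

/-- The example game: `0 → 1`, `1 → 2`, `1 → 3`, `2 → 2`, `3 → 3`, target `3`. -/
def exG : PawnGame (Fin 4) (Fin 4) where
  E w u := (w = 0 ∧ u = 1) ∨ (w = 1 ∧ (u = 2 ∨ u = 3)) ∨ (w = 2 ∧ u = 2) ∨ (w = 3 ∧ u = 3)
  total := by
    intro w
    fin_cases w
    · exact ⟨1, Or.inl ⟨rfl, rfl⟩⟩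
    · exact ⟨2, Or.inr (Or.inl ⟨rfl, Or.inl rfl⟩)⟩
    · exact ⟨2, Or.inr (Or.inr (Or.inl ⟨rfl, rfl⟩))⟩
    · exact ⟨3, Or.inr (Or.inr (Or.inr ⟨rfl, rfl⟩))⟩
  owner := id
  target w := w = 3

lemma exG_E0 : ∀ u, exG.E 0 u → u = 1 := by
  intro u h
  rcases h with ⟨_, h⟩ | ⟨h, _⟩ | ⟨h, _⟩ | ⟨h, _⟩
  · exact h
  all_goals exact absurd h (by decide)

lemma exG_E2 : ∀ u, exG.E 2 u → u = 2 := by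
  intro u h
  rcases h with ⟨h, _⟩ | ⟨h, _⟩ | ⟨_, h⟩ | ⟨h, _⟩
  · exact absurd h (by decide)
  · exact absurd h (by decide)
  · exact h
  · exact absurd h (by decide)

lemma play_succ {Pos : Type*} (g : TB Pos) (f1 f2 : Strat Pos) (p0 : Pos) (n : ℕ) :
    g.play f1 f2 p0 (n + 1) =
      (if g.turn1 (g.play f1 f2 p0 n) then
        f1 (g.histPlay f1 f2 p0 n).1 (g.play f1 f2 p0 n)
      else f2 (g.histPlay f1 f2 p0 n).1 (g.play f1 f2 p0 n)) := rfl

lemma move_play {Pos : Type*} (g : TB Pos) {f1 f2 : Strat Pos}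
    (h1 : g.Legal f1) (h2 : g.Legal f2) (p0 : Pos) (n : ℕ) :
    g.move (g.play f1 f2 p0 n) (g.play f1 f2 p0 (n + 1)) := by
  rw [play_succ]
  split
  · exact h1 _ _
  · exact h2 _ _

/-- Player 1's strategy: from vertex `1` move to the target `3`; after an opponent
move from a vertex he does not control, grab pawn `1` if possible. -/
noncomputable def f1strat : Strat (GPos (Fin 4) (Fin 4)) := fun _ p =>
  match p with
  | .conf w P => .mid (if w = 0 then 1 else if w = 1 then 3 else w) w P
  | .mid u w P => if w ∉ P ∧ (1 : Fin 4) ∉ P then .conf u (insert 1 P) else .conf u P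

/-- Player 2's strategy: from vertex `1` move to the sink `2`; never grab. -/
noncomputable def f2strat : Strat (GPos (Fin 4) (Fin 4)) := fun _ p =>
  match p with
  | .conf w P => .mid (if w = 0 then 1 else if w = 1 then 2 else w) w P
  | .mid u _ P => .conf u P

lemma f1strat_legal : exG.OG.Legal f1strat := by
  intro h p
  rcases p with ⟨w, P⟩ | ⟨u, w, P⟩
  · refine OGMove.step ?_
    fin_cases w
    · exact Or.inl ⟨rfl, rfl⟩
    · exact Or.inr (Or.inl ⟨rfl, Or.inr rfl⟩)
    · exact Or.inr (Or.inr (Or.inl ⟨rfl, rfl⟩))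
    · exact Or.inr (Or.inr (Or.inr ⟨rfl, rfl⟩))
  · show OGMove exG _ (f1strat h (GPos.mid u w P))
    simp only [f1strat]
    split
    · next hc => exact OGMove.grabBy1 hc.1 hc.2
    · exact OGMove.noGrab

lemma f2strat_legal : exG.OG.Legal f2strat := by
  intro h p
  rcases p with ⟨w, P⟩ | ⟨u, w, P⟩
  · refine OGMove.step ?_
    fin_cases w
    · exact Or.inl ⟨rfl, rfl⟩
    · exact Or.inr (Or.inl ⟨rfl, Or.inl rfl⟩)
    · exact Or.inr (Or.inr (Or.inl ⟨rfl, rfl⟩))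
    · exact Or.inr (Or.inr (Or.inr ⟨rfl, rfl⟩))
  · exact OGMove.noGrab

/-- Invariant witnessing Player 2's win from `⟨0, {0}⟩`. -/
def wInv : GPos (Fin 4) (Fin 4) → Prop
  | .conf w P => (w = 0 ∧ P = {0}) ∨ (w = 1 ∧ (1 : Fin 4) ∉ P) ∨ w = 2
  | .mid u w P => (u = 1 ∧ w = 0 ∧ P = {0}) ∨ u = 2

lemma win2_inv (f1 : Strat (GPos (Fin 4) (Fin 4))) (h1 : exG.OG.Legal f1) (n : ℕ) :
    wInv (exG.OG.play f1 f2strat (.conf 0 {0}) n) := by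
  induction n with
  | zero => exact Or.inl ⟨rfl, rfl⟩
  | succ n ih =>
    have hmv := move_play exG.OG h1 f2strat_legal (.conf 0 {0}) n
    rcases hp : exG.OG.play f1 f2strat (.conf 0 {0}) n with ⟨w, P⟩ | ⟨u, w, P⟩
    · rw [hp] at ih hmv
      rcases ih with ⟨rfl, rfl⟩ | ⟨rfl, h1P⟩ | rfl
      · -- conf 0 {0} : any legal move goes to mid 1 0 {0}
        generalize hq : exG.OG.play f1 f2strat (.conf 0 {0}) (n + 1) = q at hmv ⊢
        cases hmv with
        | step hE =>
          have := exG_E0 _ hE; subst this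
          exact Or.inl ⟨rfl, rfl, rfl⟩
      · -- conf 1 P with 1 ∉ P : Player 2 moves the token to 2
        rw [play_succ, hp, if_neg (show ¬ exG.OG.turn1 (GPos.conf 1 P) from h1P)]
        show wInv (f2strat _ (GPos.conf 1 P))
        simp only [f2strat]
        exact Or.inr (by norm_num)
      · -- conf 2 P : any legal move goes to mid 2 2 P
        generalize hq : exG.OG.play f1 f2strat (.conf 0 {0}) (n + 1) = q at hmv ⊢
        cases hmv with
        | step hE =>
          have := exG_E2 _ hE; subst this
          exact Or.inr rfl
    · rw [hp] at ih hmv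
      rcases ih with ⟨rfl, rfl, rfl⟩ | rfl
      · -- mid 1 0 {0} : any legal move goes to conf 1 Q with 1 ∉ Q
        generalize hq : exG.OG.play f1 f2strat (.conf 0 {0}) (n + 1) = q at hmv ⊢
        cases hmv with
        | noGrab =>
          exact Or.inr (Or.inl ⟨rfl,
            fun h => absurd (Set.mem_singleton_iff.mp h) (by decide)⟩)
        | grabBy2 hw hj =>
          exact Or.inr (Or.inl ⟨rfl,
            fun h => absurd (Set.mem_singleton_iff.mp h.1) (by decide)⟩)
        | grabBy1 hw hj => exact absurd rfl hw
      · -- mid 2 w P : any legal move goes to conf 2 Q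
        generalize hq : exG.OG.play f1 f2strat (.conf 0 {0}) (n + 1) = q at hmv ⊢
        cases hmv with
        | noGrab => exact Or.inr (Or.inr rfl)
        | grabBy2 hw hj => exact Or.inr (Or.inr rfl)
        | grabBy1 hw hj => exact Or.inr (Or.inr rfl)

/-- **Non-monotonicity of OVPP optional-grabbing pawn games** (Example 1.1): there exist
an OVPP optional-grabbing pawn game (pawns are identified with the vertices they own,
`owner = id`), a vertex `v` (owned by pawn `j = v`), and sets of pawns `P' ⊊ P` with
`j ∈ P` and `j ∉ P'`, such that Player 1 wins from the configuration `⟨v,P'⟩` but loses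
(i.e. Player 2 wins) from the configuration `⟨v,P⟩`. -/
theorem ovpp_optional_grabbing_nonmonotonic :
    ∃ (G : PawnGame (Fin 4) (Fin 4)) (v : Fin 4) (P P' : Set (Fin 4)),
      G.owner = id ∧ P' ⊂ P ∧ G.owner v ∈ P ∧ G.owner v ∉ P' ∧
      G.OG.Win1 (.conf v P') ∧ G.OG.Win2 (.conf v P) := by
  refine ⟨exG, 0, {0}, ∅, rfl, ?_, ?_, ?_, ?_, ?_⟩
  · exact Set.empty_ssubset.mpr (Set.singleton_nonempty _)
  · exact rfl
  · exact Set.notMem_empty _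
  -- Player 1 wins from ⟨0, ∅⟩
  · refine ⟨f1strat, f1strat_legal, fun f2 hf2 => ⟨4, ?_⟩⟩
    set p0 : GPos (Fin 4) (Fin 4) := .conf 0 ∅ with hp0
    -- step 1 : Player 2 must move the token to vertex 1
    have hmv0 := move_play exG.OG f1strat_legal hf2 p0 0
    have h1 : exG.OG.play f1strat f2 p0 1 = GPos.mid 1 0 ∅ := by
      generalize hq : exG.OG.play f1strat f2 p0 1 = q at hmv0 ⊢
      cases hmv0 with
      | step hE => rw [exG_E0 _ hE]
    -- step 2 : Player 1 grabs pawn 1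
    have h2 : exG.OG.play f1strat f2 p0 2 = GPos.conf 1 (insert 1 ∅) := by
      rw [play_succ, h1,
        if_pos (show exG.OG.turn1 (GPos.mid 1 0 ∅) from Set.notMem_empty _)]
      simp only [f1strat]
      rw [if_pos ⟨Set.notMem_empty _, Set.notMem_empty _⟩]
    -- step 3 : Player 1 moves the token to the target 3
    have h3 : exG.OG.play f1strat f2 p0 3 = GPos.mid 3 1 (insert 1 ∅) := by
      rw [play_succ, h2,
        if_pos (show exG.OG.turn1 (GPos.conf 1 (insert 1 ∅)) from Set.mem_insert _ _)]
      simp only [f1strat]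
      norm_num
    -- step 4 : whatever Player 2 does, the token reaches the target
    have hmv3 := move_play exG.OG f1strat_legal hf2 p0 3
    rw [h3] at hmv3
    generalize hq : exG.OG.play f1strat f2 p0 4 = q at hmv3 ⊢
    cases hmv3 with
    | noGrab => exact rfl
    | grabBy2 hw hj => exact rfl
    | grabBy1 hw hj => exact rfl
  -- Player 2 wins from ⟨0, {0}⟩
  · refine ⟨f2strat, f2strat_legal, fun f1 h1 n htgt => ?_⟩
    have hinv := win2_inv f1 h1 n
    rcases hp : exG.OG.play f1 f2strat (.conf 0 {0}) n with ⟨w, P⟩ | ⟨u, w, P⟩ <;>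
      rw [hp] at hinv htgt
    · rcases hinv with ⟨rfl, _⟩ | ⟨rfl, _⟩ | rfl <;>
        exact absurd (show (_ : Fin 4) = 3 from htgt) (by decide)
    · exact htgt
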